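/- arXiv:1803.08303 — 4 statements merged into one kernel-verified Lean document; each statement's English description precedes it below -/
import Mathlib

section
/- For all integers t ≥ 2 and c ≥ 2, the alternating sum ∑_{i=0}^{t-1} (-1)^i * C(t+c-1, t-i-1) * C(t+c-1-i, t-1) * C(c+2+i, i) equals (4 + 12c + 8c² - 5ct - 7c²t - ct² + c²t²) * (c+t-1)! / (2 * (2+c)! * (t-1)!). -/
/-!
Write `t = m + 1` and index the summands by `i + j = m`. Trinomial revision and absorption turn the
`i`-th summand into `C(c+m, m) / ((c+1)(c+2))` times `(-1)^i C(c,i) C(c+j,c) (c+i+1)(c+i+2)`.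
Since `c + i + 1 = (2c + 2 + m) - (c + j + 1)`, the quadratic weight is a polynomial in `c + j + 1`,
and absorbing its factors into `C(c+j, c)` leaves the three convolutions
`∑ (-1)^i C(c,i) C(c+k+j, c+k)`, `k = 0, 1, 2`. Chu–Vandermonde evaluates them to `C(k+m, m)`.
-/

open Finset

/-- Chu–Vandermonde with a negative upper index: compare the coefficients of `X^m` in
`(1 - X)^a (1 - X)^-(n+1) = (1 - X)^-(n-a+1)`. -/
theorem sum_antidiagonal_neg_one_pow_mul_choose_mul_add_choose {a n : ℕ} (h : a ≤ n) (m : ℕ) :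
    ∑ ij ∈ antidiagonal m, (-1 : ℤ) ^ ij.1 * a.choose ij.1 * (n + ij.2).choose n =
      (n - a + m).choose m := by
  have hV := Ring.add_choose_eq (r := (a : ℤ)) (s := -((n + 1 : ℕ) : ℤ)) m (Commute.all _ _)
  rw [show (a : ℤ) + -((n + 1 : ℕ) : ℤ) = -((n - a + 1 : ℕ) : ℤ) by push_cast [h]; ring,
    Ring.choose_neg,
    show ((n - a + 1 : ℕ) : ℤ) + m - 1 = ((n - a + m : ℕ) : ℤ) by push_cast [h]; ring,
    Ring.choose_natCast, Units.smul_def, Int.coe_negOnePow_natCast, smul_eq_mul] at hV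
  have hterm : ∀ ij ∈ antidiagonal m, (-1 : ℤ) ^ ij.1 * a.choose ij.1 * (n + ij.2).choose n =
      (-1) ^ m * (Ring.choose (a : ℤ) ij.1 * Ring.choose (-((n + 1 : ℕ) : ℤ)) ij.2) := by
    rintro ⟨i, j⟩ hij
    rw [HasAntidiagonal.mem_antidiagonal] at hij
    rw [Ring.choose_natCast, Ring.choose_neg, Units.smul_def, Int.coe_negOnePow_natCast,
      smul_eq_mul, show ((n + 1 : ℕ) : ℤ) + j - 1 = ((n + j : ℕ) : ℤ) by push_cast; ring,
      Ring.choose_natCast, ← Nat.choose_symm_add, ← hij]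
    linear_combination -(-1 : ℤ) ^ i * a.choose i * (n + j).choose n *
      (Even.neg_one_pow ⟨j, rfl⟩ : (-1 : ℤ) ^ (j + j) = 1)
  rw [sum_congr rfl hterm, ← mul_sum, ← hV, ← mul_assoc, ← pow_add, ← two_mul, pow_mul]
  simp

namespace Nat

theorem add_choose_mul_add_choose_mul_add_choose (c i j : ℕ) :
    (c + (i + j)).choose j * (c + j).choose (i + j) * (c + i).choose i =
      (c + (i + j)).choose (i + j) * (c.choose i * (c + j).choose c) := by
  rcases lt_or_ge c i with hci | hic
  · simp [choose_eq_zero_of_lt hci, choose_eq_zero_of_lt (show c + j < i + j by omega)]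
  -- by trinomial revision, both sides equal `C(c+i+j, i) C(c+j, c) C(c+j, i+j)`
  have h₁ := choose_mul (n := c + (i + j)) (k := c + i) (s := i) (by omega)
  have h₂ := choose_mul (n := c + (i + j)) (k := c) (s := i) hic
  rw [show c + (i + j) - i = c + j by omega, show c + i - i = c by omega] at h₁
  rw [show c + (i + j) - i = c + j by omega,
    choose_symm_of_eq_add (show c + j = (c - i) + (i + j) by omega)] at h₂
  rw [choose_symm_of_eq_add (show c + (i + j) = j + (c + i) by omega),
    choose_symm_of_eq_add (show c + (i + j) = (i + j) + c by omega), mul_right_comm, h₁,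
    ← mul_assoc, h₂]
  ring

theorem add_choose_mul_add_one_mul_add_two (c i : ℕ) :
    (c + i).choose c * ((c + i + 1) * (c + i + 2)) =
      (c + 2 + i).choose (c + 2) * ((c + 1) * (c + 2)) := by
  have h₁ := add_one_mul_choose_eq (c + i) c
  have h₂ := add_one_mul_choose_eq (c + i + 1) (c + 1)
  rw [show c + i + 1 + 1 = c + 2 + i by ring] at h₂
  calc (c + i).choose c * ((c + i + 1) * (c + i + 2))
      = (c + 2 + i) * ((c + i + 1) * (c + i).choose c) := by ring
    _ = (c + 2 + i).choose (c + 2) * ((c + 1) * (c + 2)) := by rw [h₁, ← mul_assoc, h₂]; ring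

end Nat

theorem neg_one_pow_mul_choose_mul_choose_mul_choose_eq {c i j m : ℕ} (hij : i + j = m) :
    (-1 : ℚ) ^ i * (c + m).choose j * (c + j).choose m * (c + 2 + i).choose i =
      (c + m).choose m / ((c + 1) * (c + 2)) *
        ((-1) ^ i * c.choose i * ((c + j).choose c * ((c + i + 1) * (c + i + 2)))) := by
  subst hij
  have h₁ : ((c + (i + j)).choose j * (c + j).choose (i + j) * (c + i).choose i : ℚ) =
      (c + (i + j)).choose (i + j) * (c.choose i * (c + j).choose c) := by
    exact_mod_cast Nat.add_choose_mul_add_choose_mul_add_choose c i j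
  have h₂ : ((c + i).choose i * ((c + i + 1) * (c + i + 2)) : ℚ) =
      (c + 2 + i).choose i * ((c + 1) * (c + 2)) := by
    rw [← Nat.choose_symm_add, ← Nat.choose_symm_add]
    exact_mod_cast Nat.add_choose_mul_add_one_mul_add_two c i
  calc (-1 : ℚ) ^ i * (c + (i + j)).choose j * (c + j).choose (i + j) * (c + 2 + i).choose i
      = (-1) ^ i * ((c + (i + j)).choose j * (c + j).choose (i + j) * (c + i).choose i) *
          ((c + i + 1) * (c + i + 2)) / ((c + 1) * (c + 2)) := by
        rw [eq_div_iff (by positivity)]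
        linear_combination -(-1 : ℚ) ^ i * (c + (i + j)).choose j * (c + j).choose (i + j) * h₂
    _ = _ := by rw [h₁]; ring

theorem add_choose_mul_sub_mul_sub (c j : ℕ) (x : ℚ) :
    (c + j).choose c * ((x - (c + j + 1)) * (x + 1 - (c + j + 1))) =
      x * (x + 1) * (c + j).choose c - 2 * (x + 1) * (c + 1) * (c + 1 + j).choose (c + 1) +
        (c + 1) * (c + 2) * (c + 2 + j).choose (c + 2) := by
  have h₁ : ((c + j + 1) * (c + j).choose c : ℚ) = (c + 1 + j).choose (c + 1) * (c + 1) := by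
    rw [show c + 1 + j = c + j + 1 by ring]
    exact_mod_cast Nat.add_one_mul_choose_eq (c + j) c
  have h₂ : ((c + j).choose c * ((c + j + 1) * (c + j + 2)) : ℚ) =
      (c + 2 + j).choose (c + 2) * ((c + 1) * (c + 2)) := by
    exact_mod_cast Nat.add_choose_mul_add_one_mul_add_two c j
  linear_combination h₂ - (2 * x + 2) * h₁

theorem sum_antidiagonal_neg_one_pow_mul_choose_mul_choose_mul_choose (c m : ℕ) :
    ∑ ij ∈ antidiagonal m,
        (-1 : ℚ) ^ ij.1 * (c + m).choose ij.2 * (c + ij.2).choose m * (c + 2 + ij.1).choose ij.1 =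
      (c + m).choose m / ((c + 1) * (c + 2)) *
        ((2 * c + 2 + m) * (2 * c + 3 + m) - 2 * (2 * c + 3 + m) * (c + 1) * (1 + m).choose m +
          (c + 1) * (c + 2) * (2 + m).choose m) := by
  set x : ℚ := 2 * c + 2 + m with hx
  have hterm : ∀ ij ∈ antidiagonal m,
      (-1 : ℚ) ^ ij.1 * (c + m).choose ij.2 * (c + ij.2).choose m * (c + 2 + ij.1).choose ij.1 =
        (c + m).choose m / ((c + 1) * (c + 2)) *
          (x * (x + 1) * ((-1) ^ ij.1 * c.choose ij.1 * (c + ij.2).choose c) -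
            2 * (x + 1) * (c + 1) * ((-1) ^ ij.1 * c.choose ij.1 * (c + 1 + ij.2).choose (c + 1)) +
            (c + 1) * (c + 2) * ((-1) ^ ij.1 * c.choose ij.1 * (c + 2 + ij.2).choose (c + 2))) := by
    rintro ⟨i, j⟩ hij
    rw [HasAntidiagonal.mem_antidiagonal] at hij
    have hi : (c + i + 1 : ℚ) = x - (c + j + 1) := by rw [hx, ← hij]; push_cast; ring
    rw [neg_one_pow_mul_choose_mul_choose_mul_choose_eq hij, hi,
      show (c + i + 2 : ℚ) = x + 1 - (c + j + 1) by linear_combination hi,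
      add_choose_mul_sub_mul_sub]
    ring
  have hconv : ∀ k, ∑ ij ∈ antidiagonal m, (-1 : ℚ) ^ ij.1 * c.choose ij.1 *
      (c + k + ij.2).choose (c + k) = (k + m).choose m := by
    intro k
    have := sum_antidiagonal_neg_one_pow_mul_choose_mul_add_choose (Nat.le_add_right c k) m
    rw [Nat.add_sub_cancel_left] at this
    exact_mod_cast this
  have hconv₀ :
      ∑ ij ∈ antidiagonal m, (-1 : ℚ) ^ ij.1 * c.choose ij.1 * (c + ij.2).choose c = 1 := by
    simpa using hconv 0
  rw [sum_congr rfl hterm, ← mul_sum, sum_add_distrib, sum_sub_distrib, ← mul_sum, ← mul_sum,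
    ← mul_sum, hconv₀, hconv 1, hconv 2]
  ring

theorem alternating_sum_f_general (t c : ℕ) (ht : 2 ≤ t) :
    ∑ i ∈ Finset.range t, (-1 : ℚ) ^ i * ((t + c - 1).choose (t - i - 1)) *
        ((t + c - 1 - i).choose (t - 1)) * ((c + 2 + i).choose i) =
      (4 + 12 * (c : ℚ) + 8 * c ^ 2 - 5 * c * t - 7 * c ^ 2 * t - c * t ^ 2 + c ^ 2 * t ^ 2) *
        ((c + t - 1).factorial) / (2 * ((2 + c).factorial) * ((t - 1).factorial)) := by
  obtain ⟨m, rfl⟩ : ∃ m, t = m + 1 := ⟨t - 1, by omega⟩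
  have hsum : ∑ i ∈ range (m + 1), (-1 : ℚ) ^ i * ((m + 1 + c - 1).choose (m + 1 - i - 1)) *
        ((m + 1 + c - 1 - i).choose (m + 1 - 1)) * ((c + 2 + i).choose i) =
      ∑ ij ∈ antidiagonal m, (-1 : ℚ) ^ ij.1 * (c + m).choose ij.2 * (c + ij.2).choose m *
        (c + 2 + ij.1).choose ij.1 := by
    rw [Nat.sum_antidiagonal_eq_sum_range_succ (fun i j => (-1 : ℚ) ^ i * (c + m).choose j *
      (c + j).choose m * (c + 2 + i).choose i)]
    refine sum_congr rfl fun i hi => ?_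
    rw [mem_range] at hi
    rw [show m + 1 + c - 1 = c + m by omega, show m + 1 - i - 1 = m - i by omega,
      show c + m - i = c + (m - i) by omega, Nat.add_sub_cancel]
  rw [hsum, sum_antidiagonal_neg_one_pow_mul_choose_mul_choose_mul_choose,
    show c + (m + 1) - 1 = c + m by omega, Nat.add_sub_cancel, ← Nat.choose_symm_add,
    ← Nat.choose_symm_add, ← Nat.choose_symm_add, Nat.cast_add_choose, Nat.choose_one_right,
    Nat.cast_choose_two, show 2 + c = c + 1 + 1 by ring, Nat.factorial_succ, Nat.factorial_succ]
  field_simp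
  push_cast
  ring

/-- The alternating-sum identity defining `f(t,c)` in Kleppe–Miró-Roig. -/
theorem alternating_sum_f (t c : ℕ) (ht : 2 ≤ t) (hc : 2 ≤ c) :
    ∑ i ∈ Finset.range t, (-1 : ℚ) ^ i * ((t + c - 1).choose (t - i - 1)) *
        ((t + c - 1 - i).choose (t - 1)) * ((c + 2 + i).choose i) =
      (4 + 12 * (c : ℚ) + 8 * c ^ 2 - 5 * c * t - 7 * c ^ 2 * t - c * t ^ 2 + c ^ 2 * t ^ 2) *
        ((c + t - 1).factorial) / (2 * ((2 + c).factorial) * ((t - 1).factorial)) :=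
  alternating_sum_f_general t c ht
end

section
/- For all integers t ≥ 2 and c ≥ 2, the alternating sum ∑_{i=1}^{t-1} (-1)^i * C(t+c-1, t-i-1) * C(t+c-1-i, t-1) * C(c+1+i, i-1) equals c * (-2 - 4c - t + ct) * (c+t-1)! / (2 * (2+c)! * (t-2)!). -/
/-!
Pulling out the factor `(t+c-1)! / ((c+2)! (t-2)!)`, the summand becomes
`(-1)^i (c+1+i) C(t-2, i-1) C(t+c-1-i, t-1)`. The linear factor `c+1+i` is absorbed by
`(n+1) C(n,k) = (k+1) C(n+1,k+1)`, which leaves two sums of the alternating Vandermonde shape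
`∑ (-1)^i C(m,i) C(N+m-i, k+m) = C(N,k)`, namely `C(c,1)` and `C(c+1,2)`.
-/

open Finset Nat

theorem alternating_sum_choose_mul_choose_add {R : Type*} [CommRing R] (N k m : ℕ) :
    ∑ i ∈ range (m + 1), (-1 : R) ^ i * m.choose i * (N + (m - i)).choose (k + m) =
      N.choose k := by
  induction m with
  | zero => simp
  | succ m ih =>
    have hsplit := sum_choose_succ_mul
      (fun i r => (-1 : R) ^ i * ((N + r).choose (k + (m + 1)) : R)) m
    calc ∑ i ∈ range (m + 1 + 1), (-1 : R) ^ i * (m + 1).choose i *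
          (N + (m + 1 - i)).choose (k + (m + 1))
        = ∑ i ∈ range (m + 1), (m.choose i : R) *
            ((-1) ^ i * (N + (m + 1 - i)).choose (k + (m + 1))) +
          ∑ i ∈ range (m + 1), (m.choose i : R) *
            ((-1) ^ (i + 1) * (N + (m - i)).choose (k + (m + 1))) := by
          rw [← hsplit]; exact sum_congr rfl fun i _ => by ring
      _ = ∑ i ∈ range (m + 1), (-1 : R) ^ i * m.choose i * (N + (m - i)).choose (k + m) := by
          rw [← sum_add_distrib]
          refine sum_congr rfl fun i hi => ?_
          have hpascal : (N + (m + 1 - i)).choose (k + (m + 1)) =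
              (N + (m - i)).choose (k + m) + (N + (m - i)).choose (k + (m + 1)) := by
            rw [show N + (m + 1 - i) = N + (m - i) + 1 by grind [mem_range_succ_iff]]
            exact Nat.choose_succ_succ' _ _
          rw [hpascal]; push_cast; ring
      _ = N.choose k := ih

theorem choose_mul_choose_eq_mul_choose_mul_factorial_div (c m j : ℕ) (hj : j ≤ m) :
    ((m + c + 1).choose (m - j) * (c + 2 + j).choose j : ℚ) =
      (c + 2 + j) * m.choose j * ((m + c + 1)! / ((2 + c)! * m !)) := by
  obtain ⟨b, rfl⟩ := Nat.exists_eq_add_of_le hj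
  rw [Nat.add_sub_cancel_left, Nat.cast_choose ℚ (by omega : b ≤ j + b + c + 1),
    Nat.cast_choose ℚ (by omega : j ≤ c + 2 + j), Nat.cast_choose ℚ (by omega : j ≤ j + b),
    show j + b + c + 1 - b = c + 1 + j by omega, show c + 2 + j - j = 2 + c by omega,
    Nat.add_sub_cancel_left, show c + 2 + j = (c + 1 + j) + 1 by omega,
    Nat.factorial_succ (c + 1 + j)]
  push_cast
  field_simp
  ring

theorem alternating_sum_choose_mul_linear_mul_choose (c m : ℕ) :
    ∑ j ∈ range (m + 1),
        (-1 : ℚ) ^ j * m.choose j * ((c + 2 + j) * (c + (m - j)).choose (1 + m)) =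
      c * (2 * c + m + 3) - (m + 2) * (c + 1).choose 2 := by
  have hterm : ∀ j ∈ range (m + 1), (c + 2 + j : ℚ) * (c + (m - j)).choose (1 + m) =
      (2 * c + m + 3) * (c + (m - j)).choose (1 + m) -
        (m + 2) * (c + 1 + (m - j)).choose (2 + m) := by
    intro j hj
    have hjm : j ≤ m := mem_range_succ_iff.mp hj
    have h := Nat.add_one_mul_choose_eq (c + (m - j)) (1 + m)
    rw [show c + (m - j) + 1 = c + 1 + (m - j) by omega, show 1 + m + 1 = 2 + m by omega] at h
    have hq := congrArg (Nat.cast : ℕ → ℚ) h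
    push_cast [Nat.cast_sub hjm] at hq
    linear_combination -hq
  calc ∑ j ∈ range (m + 1),
        (-1 : ℚ) ^ j * m.choose j * ((c + 2 + j) * (c + (m - j)).choose (1 + m))
      = (2 * c + m + 3) *
          ∑ j ∈ range (m + 1), (-1 : ℚ) ^ j * m.choose j * (c + (m - j)).choose (1 + m)
        - (m + 2) * ∑ j ∈ range (m + 1), (-1 : ℚ) ^ j * m.choose j *
            (c + 1 + (m - j)).choose (2 + m) := by
        rw [mul_sum, mul_sum, ← sum_sub_distrib]
        exact sum_congr rfl fun j hj => by rw [hterm j hj]; ring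
    _ = c * (2 * c + m + 3) - (m + 2) * (c + 1).choose 2 := by
        rw [alternating_sum_choose_mul_choose_add, alternating_sum_choose_mul_choose_add,
          Nat.choose_one_right]
        ring

theorem alternating_sum_g_general (t c : ℕ) (ht : 2 ≤ t) :
    ∑ i ∈ Finset.Icc 1 (t - 1), (-1 : ℚ) ^ i * ((t + c - 1).choose (t - i - 1)) *
        ((t + c - 1 - i).choose (t - 1)) * ((c + 1 + i).choose (i - 1)) =
      (c : ℚ) * (-2 - 4 * c - t + c * t) *
        ((c + t - 1).factorial) / (2 * ((2 + c).factorial) * ((t - 2).factorial)) := by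
  obtain ⟨m, rfl⟩ := Nat.exists_eq_add_of_le' ht
  have hreindex : ∑ i ∈ Icc 1 (m + 2 - 1),
        (-1 : ℚ) ^ i * ((m + 2 + c - 1).choose (m + 2 - i - 1)) *
        ((m + 2 + c - 1 - i).choose (m + 2 - 1)) * ((c + 1 + i).choose (i - 1)) =
      ∑ j ∈ range (m + 1), -((m + c + 1)! / ((2 + c)! * m ! : ℚ)) *
        ((-1 : ℚ) ^ j * m.choose j * ((c + 2 + j) * (c + (m - j)).choose (1 + m))) := by
    rw [show m + 2 - 1 = m + 1 by omega, ← Ico_add_one_right_eq_Icc, sum_Ico_eq_sum_range,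
      show m + 1 + 1 - 1 = m + 1 by omega]
    refine sum_congr rfl fun j hj => ?_
    have hjm : j ≤ m := mem_range_succ_iff.mp hj
    rw [show m + 2 + c - 1 = m + c + 1 by omega, show m + 2 - (1 + j) - 1 = m - j by omega,
      show m + c + 1 - (1 + j) = c + (m - j) by omega, Nat.add_comm m 1,
      show c + 1 + (1 + j) = c + 2 + j by omega, show 1 + j - 1 = j by omega, pow_add]
    linear_combination -(-1 : ℚ) ^ j * ((c + (m - j)).choose (1 + m) : ℚ) *
      choose_mul_choose_eq_mul_choose_mul_factorial_div c m j hjm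
  rw [hreindex, ← mul_sum, alternating_sum_choose_mul_linear_mul_choose, Nat.cast_choose_two,
    show c + (m + 2) - 1 = m + c + 1 by omega, Nat.add_sub_cancel]
  push_cast
  field_simp
  ring

/-- The alternating-sum identity defining `g(t,c)` in Kleppe–Miró-Roig. -/
theorem alternating_sum_g (t c : ℕ) (ht : 2 ≤ t) (hc : 2 ≤ c) :
    ∑ i ∈ Finset.Icc 1 (t - 1), (-1 : ℚ) ^ i * ((t + c - 1).choose (t - i - 1)) *
        ((t + c - 1 - i).choose (t - 1)) * ((c + 1 + i).choose (i - 1)) =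
      (c : ℚ) * (-2 - 4 * c - t + c * t) *
        ((c + t - 1).factorial) / (2 * ((2 + c).factorial) * ((t - 2).factorial)) :=
  alternating_sum_g_general t c ht
end

section
/- For all integers t ≥ 3 and c ≥ 2, the alternating sum ∑_{i=2}^{t-1} (-1)^i * C(t+c-1, t-i-1) * C(t+c-1-i, t-1) * C(c+i, i-2) equals (c² - c) * (c+t-1)! / (2 * (2+c)! * (t-3)!). -/
/-!
Put `t = s + 3` and `N = c + t - 1`, and index the sum by `j = t - 1 - i`. Trinomial revision
`C(N, j) C(N - j, s - j) = C(N, s) C(s, j)` pulls `C(N, s)` out of every term, leaving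
`∑ⱼ (-1)^(s-j) C(s, j) C(c + j, s + 2)`. This is the `s`-th forward difference of
`x ↦ C(x, s + 2)` at `c`, that is `C(c, 2)`, and `C(N, s) C(c, 2)` is the right-hand side.
-/

open Finset

theorem sum_range_neg_one_pow_mul_choose_mul_choose_add (n j y : ℕ) :
    ∑ k ∈ range (n + 1), (-1 : ℤ) ^ (n - k) * n.choose k * (y + k).choose (n + j) =
      y.choose j := by
  have h := congrFun (fwdDiff_iter_choose j n) y
  rw [fwdDiff_iter_eq_sum_shift] at h
  simpa [mul_assoc] using h

theorem sum_Icc_neg_one_pow_mul_choose_eq_choose_mul_sum_range (s c : ℕ) :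
    ∑ i ∈ Icc 2 (s + 3 - 1), (-1 : ℚ) ^ i * ((s + 3 + c - 1).choose (s + 3 - i - 1)) *
        ((s + 3 + c - 1 - i).choose (s + 3 - 1)) * ((c + i).choose (i - 2)) =
      ((s + c + 2).choose s : ℚ) *
        (∑ j ∈ range (s + 1), (-1 : ℤ) ^ (s - j) * s.choose j * (c + j).choose (s + 2) : ℤ) := by
  rw [Int.cast_sum, mul_sum]
  refine sum_nbij' (fun i ↦ s + 2 - i) (fun j ↦ s + 2 - j) ?_ ?_ ?_ ?_ ?_
  · intro i hi; simp only [mem_Icc] at hi; simp only [mem_range]; omega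
  · intro j hj; simp only [mem_range] at hj; simp only [mem_Icc]; omega
  · intro i hi; simp only [mem_Icc] at hi; omega
  · intro j hj; simp only [mem_range] at hj; omega
  · intro i hi
    simp only [mem_Icc] at hi
    obtain ⟨j, rfl⟩ : ∃ j, i = s + 2 - j := ⟨s + 2 - i, by omega⟩
    have hj : j ≤ s := by omega
    rw [show s + 2 - (s + 2 - j) = j by omega, show s + 3 + c - 1 = s + c + 2 by omega,
      show s + 3 - (s + 2 - j) - 1 = j by omega, show s + c + 2 - (s + 2 - j) = c + j by omega,
      show s + 3 - 1 = s + 2 by omega, show c + (s + 2 - j) = s + c + 2 - j by omega,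
      show s + 2 - j - 2 = s - j by omega, show s + 2 - j = s - j + 2 by omega,
      pow_add, neg_one_sq, mul_one]
    have trinomial_revision : ((s + c + 2).choose s * s.choose j : ℚ) =
        (s + c + 2).choose j * (s + c + 2 - j).choose (s - j) := by
      exact_mod_cast Nat.choose_mul hj
    push_cast
    linear_combination -(-1 : ℚ) ^ (s - j) * ((c + j).choose (s + 2) : ℚ) * trinomial_revision

theorem alternating_sum_h_general (t c : ℕ) (ht : 3 ≤ t) :
    ∑ i ∈ Finset.Icc 2 (t - 1), (-1 : ℚ) ^ i * ((t + c - 1).choose (t - i - 1)) *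
        ((t + c - 1 - i).choose (t - 1)) * ((c + i).choose (i - 2)) =
      ((c : ℚ) ^ 2 - c) *
        ((c + t - 1).factorial) / (2 * ((2 + c).factorial) * ((t - 3).factorial)) := by
  obtain ⟨s, rfl⟩ : ∃ s, t = s + 3 := ⟨t - 3, by omega⟩
  rw [sum_Icc_neg_one_pow_mul_choose_eq_choose_mul_sum_range,
    sum_range_neg_one_pow_mul_choose_mul_choose_add, Int.cast_natCast,
    Nat.cast_choose ℚ (by omega : s ≤ s + c + 2), Nat.cast_choose_two,
    show s + c + 2 - s = 2 + c by omega, show c + (s + 3) - 1 = s + c + 2 by omega,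
    show s + 3 - 3 = s by omega]
  field_simp

/-- The alternating-sum identity defining `h(t,c)` in Kleppe–Miró-Roig (for `t ≥ 3`). -/
theorem alternating_sum_h (t c : ℕ) (ht : 3 ≤ t) (hc : 2 ≤ c) :
    ∑ i ∈ Finset.Icc 2 (t - 1), (-1 : ℚ) ^ i * ((t + c - 1).choose (t - i - 1)) *
        ((t + c - 1 - i).choose (t - 1)) * ((c + i).choose (i - 2)) =
      ((c : ℚ) ^ 2 - c) *
        ((c + t - 1).factorial) / (2 * ((2 + c).factorial) * ((t - 3).factorial)) :=
  alternating_sum_h_general t c ht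
end

section
/- For all integers t ≥ 3 and n ≥ 3, the quantity (-1 - n(t-2) + t) * (n+t-2)! / (n! * (t-1)!) is at most t(5 + 3t - 2t²)/6, and t(5 + 3t - 2t²)/6 ≤ -2. -/
/-!
Writing `t = s + 2`, the left-hand side is `f(n) = (s + 1 - n s) (n + s)! / (n! (s + 1)!)`.
Passing from `n` to `n + 1` multiplies the factorial ratio by `(n + s + 1) / (n + 1)` and lowers
the linear factor by `s`; the net change is `-n s (s + 1) (n + s)! / ((n + 1)! (s + 1)!) ≤ 0`,
so `f` is antitone and `f(n) ≤ f(3) = t (5 + 3t - 2t²) / 6`. Finally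
`t (5 + 3t - 2t²) + 12 = -(t - 3) (2t² + 3t + 4)`.
-/

def linearDeterminantalChi (t n : ℕ) : ℚ :=
  (-1 - (n : ℚ) * ((t : ℚ) - 2) + t) * ((n + t - 2).factorial) /
    ((n.factorial : ℚ) * ((t - 1).factorial))

lemma linearDeterminantalChi_add_two (s n : ℕ) :
    linearDeterminantalChi (s + 2) n =
      (s + 1 - n * s) * (n + s).factorial / (n.factorial * (s + 1).factorial) := by
  simp only [linearDeterminantalChi, show n + (s + 2) - 2 = n + s by omega]
  push_cast
  ring

lemma linearDeterminantalChi_succ_le (t n : ℕ) (ht : 2 ≤ t) :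
    linearDeterminantalChi t (n + 1) ≤ linearDeterminantalChi t n := by
  obtain ⟨s, rfl⟩ := Nat.exists_eq_add_of_le' ht
  rw [linearDeterminantalChi_add_two, linearDeterminantalChi_add_two, add_right_comm,
    Nat.factorial_succ, Nat.factorial_succ]
  push_cast
  rw [div_le_div_iff₀ (by positivity) (by positivity)]
  have key : (s + 1 - (n + 1) * s) * (n + s + 1) ≤ ((s : ℚ) + 1 - n * s) * (n + 1) := by
    rw [← sub_nonneg, show ((s : ℚ) + 1 - n * s) * (n + 1) - (s + 1 - (n + 1) * s) * (n + s + 1)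
      = n * s * (s + 1) by ring]
    positivity
  have := mul_le_mul_of_nonneg_right key (by positivity :
    (0 : ℚ) ≤ (n + s).factorial * n.factorial * (s + 1).factorial)
  linarith

lemma linearDeterminantalChi_antitone (t : ℕ) (ht : 2 ≤ t) :
    Antitone (linearDeterminantalChi t) :=
  antitone_nat_of_succ_le fun n => linearDeterminantalChi_succ_le t n ht

lemma linearDeterminantalChi_three (t : ℕ) (ht : 2 ≤ t) :
    linearDeterminantalChi t 3 = (t : ℚ) * (5 + 3 * t - 2 * t ^ 2) / 6 := by
  obtain ⟨s, rfl⟩ := Nat.exists_eq_add_of_le' ht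
  rw [linearDeterminantalChi_add_two, show 3 + s = s + 1 + 1 + 1 by omega, Nat.factorial_succ,
    Nat.factorial_succ]
  push_cast
  field_simp
  ring

/-- The inequalities `χ(L₁ ⊗ L₂^∨) ≤ t(5+3t-2t²)/6 ≤ -2` for linear determinantal curves
(Proposition 4.8). -/
theorem chi_curve_bound (t n : ℕ) (ht : 3 ≤ t) (hn : 3 ≤ n) :
    ((-1 - (n : ℚ) * ((t : ℚ) - 2) + t) * ((n + t - 2).factorial) /
        ((n.factorial : ℚ) * ((t - 1).factorial)) ≤
      (t : ℚ) * (5 + 3 * t - 2 * t ^ 2) / 6) ∧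
    (t : ℚ) * (5 + 3 * t - 2 * t ^ 2) / 6 ≤ -2 := by
  constructor
  · rw [← linearDeterminantalChi_three t (by omega)]
    exact linearDeterminantalChi_antitone t (by omega) hn
  · have ht' : (3 : ℚ) ≤ t := by exact_mod_cast ht
    have hfactor : (t : ℚ) * (5 + 3 * t - 2 * t ^ 2) + 12 =
        -((t - 3) * (2 * t ^ 2 + 3 * t + 4)) := by
      ring
    have : 0 ≤ ((t : ℚ) - 3) * (2 * t ^ 2 + 3 * t + 4) :=
      mul_nonneg (by linarith) (by positivity)
    linarith
end
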